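/- arXiv:1206.6188 — 2 statements merged into one kernel-verified Lean document; each statement's English description precedes it below -/
import Mathlib

section
/- Let s : [1, ∞) → ℂ be locally integrable and slowly oscillating with respect to (L,1) summability: for every ε > 0 there exist t₀ > 1 and λ > 1 such that |s(u) − s(t)| ≤ ε whenever t₀ ≤ t < u ≤ t^λ. If τ(t) := (1/log t) ∫₁ᵗ s(u)/u du → A as t → ∞, then s(t) → A as t → ∞. -/
/-!
Write `M(a, b)` for the mean of `s` on `(a, b]` against `du / u`, so that `τ(t) = M(1, t)`.
Splitting `(1, t^λ] = (1, t] ∪ (t, t^λ]` gives `(λ - 1) M(t, t^λ) = λ τ(t^λ) - τ(t)`, hence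
`M(t, t^λ) → A` for every fixed `λ > 1`. Slow oscillation puts `s(t)` within `ε` of every value
`s(u)`, `u ∈ (t, t^λ]`, and therefore within `ε` of their mean `M(t, t^λ)`.
-/

open Filter MeasureTheory Set Topology

noncomputable def logMean (f : ℝ → ℂ) (a b : ℝ) : ℂ :=
  ((Real.log (b / a) : ℂ))⁻¹ * ∫ u in Ioc a b, f u / u

theorem integrableOn_Icc_div_ofReal {f : ℝ → ℂ} {a b : ℝ} (hf : IntegrableOn f (Icc a b))
    (ha : 0 < a) : IntegrableOn (fun u => f u / u) (Icc a b) := by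
  simp_rw [div_eq_mul_inv]
  refine hf.mul_continuousOn ?_ isCompact_Icc
  exact (Complex.continuous_ofReal.continuousOn).inv₀ fun u hu =>
    Complex.ofReal_ne_zero.2 (ha.trans_le hu.1).ne'

theorem integrableOn_Ioc_inv {a b : ℝ} (ha : 0 < a) : IntegrableOn (fun u : ℝ => u⁻¹) (Ioc a b) :=
  (ContinuousOn.integrableOn_Icc (continuousOn_inv₀.mono fun _ hu =>
    (ha.trans_le hu.1).ne')).mono_set Ioc_subset_Icc_self

theorem integral_Ioc_inv {a b : ℝ} (ha : 0 < a) (hab : a ≤ b) :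
    ∫ u in Ioc a b, u⁻¹ = Real.log (b / a) := by
  rw [← intervalIntegral.integral_of_le hab, integral_inv_of_pos ha (ha.trans_le hab)]

theorem norm_logMean_sub_le {f : ℝ → ℂ} {a b ε : ℝ} {c : ℂ} (ha : 0 < a) (hab : a < b)
    (hf : IntegrableOn (fun u => f u / u) (Ioc a b)) (hfc : ∀ u ∈ Ioc a b, ‖f u - c‖ ≤ ε) :
    ‖logMean f a b - c‖ ≤ ε := by
  set L := Real.log (b / a) with hL_def
  have hL : 0 < L := Real.log_pos ((one_lt_div ha).2 hab)
  have hc : IntegrableOn (fun u : ℝ => c / u) (Ioc a b) :=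
    (integrableOn_Icc_div_ofReal (b := b) (integrableOn_const measure_Icc_lt_top.ne) ha).mono_set
      Ioc_subset_Icc_self
  have hc_int : ∫ u in Ioc a b, c / u = c * L := by
    simp_rw [div_eq_mul_inv, ← Complex.ofReal_inv]
    rw [integral_const_mul, integral_complex_ofReal, integral_Ioc_inv ha hab.le]
  have hrepr : logMean f a b - c = (L : ℂ)⁻¹ * ∫ u in Ioc a b, (f u - c) / u := by
    have hL' : (L : ℂ) ≠ 0 := Complex.ofReal_ne_zero.2 hL.ne'
    simp_rw [sub_div]
    rw [integral_sub hf hc, hc_int, logMean, ← hL_def, mul_sub]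
    field_simp
  have hbound : ‖∫ u in Ioc a b, (f u - c) / u‖ ≤ ε * L := by
    calc ‖∫ u in Ioc a b, (f u - c) / u‖ ≤ ∫ u in Ioc a b, ε * u⁻¹ := by
          refine norm_integral_le_of_norm_le ((integrableOn_Ioc_inv ha).const_mul ε) ?_
          filter_upwards [ae_restrict_mem measurableSet_Ioc] with u hu
          rw [norm_div, Complex.norm_real, Real.norm_of_nonneg (ha.trans hu.1).le, div_eq_mul_inv]
          exact mul_le_mul_of_nonneg_right (hfc u hu) (inv_nonneg.2 (ha.trans hu.1).le)
      _ = ε * L := by rw [integral_const_mul, integral_Ioc_inv ha hab.le]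
  rw [hrepr, norm_mul, norm_inv, Complex.norm_real, Real.norm_of_nonneg hL.le]
  calc L⁻¹ * ‖∫ u in Ioc a b, (f u - c) / u‖ ≤ L⁻¹ * (ε * L) := by gcongr
    _ = ε := by field_simp

theorem logMean_rpow_eq {f : ℝ → ℂ} {t l : ℝ} (ht : 1 < t) (hl : 1 < l)
    (hf : IntegrableOn (fun u => f u / u) (Ioc 1 (t ^ l))) :
    logMean f t (t ^ l) = (l * logMean f 1 (t ^ l) - logMean f 1 t) / (l - 1) := by
  have ht₀ : 0 < t := by linarith
  have htl : t < t ^ l := Real.self_lt_rpow_of_one_lt ht hl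
  have hsplit : ∫ u in Ioc 1 (t ^ l), f u / u
      = (∫ u in Ioc 1 t, f u / u) + ∫ u in Ioc t (t ^ l), f u / u := by
    rw [← setIntegral_union (Ioc_disjoint_Ioc_of_le le_rfl) measurableSet_Ioc
      (hf.mono_set (Ioc_subset_Ioc_right htl.le)) (hf.mono_set (Ioc_subset_Ioc_left ht.le)),
      Ioc_union_Ioc_eq_Ioc ht.le htl.le]
  have hlog_rpow : Real.log (t ^ l) = l * Real.log t := Real.log_rpow ht₀ l
  have hlog_div : Real.log (t ^ l / t) = (l - 1) * Real.log t := by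
    rw [Real.log_div (by positivity) ht₀.ne', hlog_rpow]
    ring
  have hlog : (Real.log t : ℂ) ≠ 0 := Complex.ofReal_ne_zero.2 (Real.log_pos ht).ne'
  have hl₀ : (l : ℂ) ≠ 0 := Complex.ofReal_ne_zero.2 (by linarith)
  have hl₁ : (l : ℂ) - 1 ≠ 0 := sub_ne_zero.2 (by exact_mod_cast hl.ne')
  simp only [logMean, div_one, hsplit, hlog_rpow, hlog_div]
  push_cast
  field_simp
  ring

theorem tendsto_logMean_rpow {f : ℝ → ℂ} {l : ℝ} {A : ℂ} (hl : 1 < l)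
    (hf : ∀ t, IntegrableOn (fun u => f u / u) (Ioc 1 t))
    (h : Tendsto (logMean f 1) atTop (𝓝 A)) :
    Tendsto (fun t => logMean f t (t ^ l)) atTop (𝓝 A) := by
  have hlim : Tendsto (fun t => (l * logMean f 1 (t ^ l) - logMean f 1 t) / (l - 1)) atTop
      (𝓝 ((l * A - A) / (l - 1))) :=
    (((h.comp (tendsto_rpow_atTop (by linarith))).const_mul _).sub h).div_const _
  have hl' : (l : ℂ) - 1 ≠ 0 := sub_ne_zero.2 (by exact_mod_cast hl.ne')
  rw [show ((l : ℂ) * A - A) / (l - 1) = A by field_simp] at hlim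
  refine hlim.congr' ?_
  filter_upwards [eventually_gt_atTop 1] with t ht
  exact (logMean_rpow_eq ht hl (hf _)).symm

theorem corollary2
    (s : ℝ → ℂ) (hs : ∀ t : ℝ, IntegrableOn s (Icc 1 t)) (A : ℂ)
    (hso : ∀ ε > (0:ℝ), ∃ t₀ > (1:ℝ), ∃ l > (1:ℝ),
      ∀ t u : ℝ, t₀ ≤ t → t < u → u ≤ t ^ l → ‖s u - s t‖ ≤ ε)
    (hL1 : Tendsto (fun t : ℝ =>
        ((Real.log t : ℂ))⁻¹ * ∫ u in Ioc (1:ℝ) t, s u / (u : ℂ))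
      atTop (nhds A)) :
    Tendsto s atTop (nhds A) := by
  have hint (t : ℝ) : IntegrableOn (fun u => s u / u) (Ioc 1 t) :=
    (integrableOn_Icc_div_ofReal (hs t) one_pos).mono_set Ioc_subset_Icc_self
  have hτ : Tendsto (logMean s 1) atTop (𝓝 A) := hL1.congr fun t => by rw [logMean, div_one]
  rw [Metric.tendsto_nhds]
  intro ε hε
  obtain ⟨t₀, ht₀, l, hl, hosc⟩ := hso (ε / 2) (half_pos hε)
  have hclose : ∀ᶠ t in atTop, ‖logMean s t (t ^ l) - s t‖ ≤ ε / 2 := by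
    filter_upwards [eventually_ge_atTop t₀] with t ht
    have ht1 : 1 < t := ht₀.trans_le ht
    exact norm_logMean_sub_le (by linarith) (Real.self_lt_rpow_of_one_lt ht1 hl)
      ((hint _).mono_set (Ioc_subset_Ioc_left ht1.le)) fun u hu => hosc t u ht hu.1 hu.2
  filter_upwards [hclose, Metric.tendsto_nhds.1 (tendsto_logMean_rpow hl hint hτ) _ (half_pos hε)]
    with t hst hmean
  calc dist (s t) A ≤ dist (logMean s t (t ^ l)) (s t) + dist (logMean s t (t ^ l)) A :=
        dist_triangle_left _ _ _
    _ < ε := by rw [dist_eq_norm]; linarith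
end

section
/- Let (s_k) be a complex sequence that is slowly oscillating with respect to (L,1) summability: for every ε > 0 there exist n₀ > 1 and λ > 1 such that |s_k − s_n| ≤ ε whenever n₀ ≤ n < k ≤ n^λ. If (1/ℓ_n) Σ_{k=1}^n s_k/k → A as n → ∞, where ℓ_n := Σ_{k=1}^n 1/k, then s_n → A. -/
/-!
Put `m = ⌊n ^ λ⌋`. Subtracting the weighted means of order `n` and `m` isolates the block
`∑_{n < k ≤ m} s_k / k`, which gives
`(ℓ_m - ℓ_n) (s_n - A) = ℓ_m (T_m - A) - ℓ_n (T_n - A) - ∑_{n < k ≤ m} (s_k - s_n) / k`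
for the means `T_j` of order `j`. The last sum is at most `ε (ℓ_m - ℓ_n)` by slow oscillation, and
since `ℓ_j = log j + O(1)`, the gap `ℓ_m - ℓ_n ≈ (λ - 1) log n` is a fixed fraction of
`ℓ_m + ℓ_n ≈ (λ + 1) log n`, so the first two terms are small against it as well.
-/

open Filter Finset Topology

theorem sum_Icc_one_sub_sum_Icc_one {M : Type*} [AddCommGroup M] (f : ℕ → M) {n m : ℕ}
    (hnm : n ≤ m) :
    ∑ k ∈ Icc 1 m, f k - ∑ k ∈ Icc 1 n, f k = ∑ k ∈ Ioc n m, f k := by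
  have hIoc : ∀ j, Icc 1 j = Ioc 0 j := fun j ↦ Icc_add_one_left_eq_Ioc 0 j
  rw [sub_eq_iff_eq_add', hIoc, hIoc, sum_Ioc_consecutive _ (Nat.zero_le n) hnm]

theorem sum_Icc_inv_natCast_eq_harmonic (n : ℕ) : ∑ k ∈ Icc 1 n, (k : ℝ)⁻¹ = harmonic n := by
  simp [harmonic_eq_sum_Icc]

theorem eventually_harmonic_floor_rpow_gap {l : ℝ} (hl : 1 < l) :
    ∀ᶠ n : ℕ in atTop, n ≤ ⌊(n : ℝ) ^ l⌋₊ ∧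
      0 < (harmonic ⌊(n : ℝ) ^ l⌋₊ : ℝ) - harmonic n ∧
      (harmonic ⌊(n : ℝ) ^ l⌋₊ : ℝ) + harmonic n ≤
        8 * l / (l - 1) * ((harmonic ⌊(n : ℝ) ^ l⌋₊ : ℝ) - harmonic n) := by
  have hl1 : 0 < l - 1 := by linarith
  have hlog : ∀ᶠ n : ℕ in atTop, max 1 (2 / (l - 1)) ≤ Real.log n :=
    (Real.tendsto_log_atTop.comp tendsto_natCast_atTop_atTop).eventually_ge_atTop _
  filter_upwards [hlog, eventually_ge_atTop 1] with n hlogn hn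
  set m := ⌊(n : ℝ) ^ l⌋₊
  have hn1 : (1 : ℝ) ≤ n := Nat.one_le_cast.2 hn
  have hnl : 1 ≤ (n : ℝ) ^ l := Real.one_le_rpow hn1 (by linarith)
  have hlog_pow : Real.log ((n : ℝ) ^ l) = l * Real.log n := Real.log_rpow (by positivity) l
  have hm_lower : l * Real.log n ≤ harmonic m :=
    hlog_pow ▸ log_le_harmonic_floor _ (by positivity)
  have hm_upper : (harmonic m : ℝ) ≤ 1 + l * Real.log n :=
    hlog_pow ▸ harmonic_floor_le_one_add_log _ hnl
  have hn_upper := harmonic_le_one_add_log n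
  have hlog1 : 1 ≤ Real.log n := le_of_max_le_left hlogn
  have hlog2 : 2 ≤ (l - 1) * Real.log n := by
    have := le_of_max_le_right hlogn
    rwa [div_le_iff₀' hl1] at this
  have hgap : (l - 1) / 2 * Real.log n ≤ harmonic m - (harmonic n : ℝ) := by linarith
  refine ⟨Nat.le_floor (Real.self_le_rpow_of_one_le hn1 hl.le), by nlinarith, ?_⟩
  calc (harmonic m : ℝ) + harmonic n ≤ 4 * l * Real.log n := by nlinarith
    _ = 8 * l / (l - 1) * ((l - 1) / 2 * Real.log n) := by field_simp; ring
    _ ≤ _ := by gcongr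

section WeightedMean

variable {E : Type*} [NormedAddCommGroup E] [NormedSpace ℝ E]

noncomputable def weightedMean (w : ℕ → ℝ) (s : ℕ → E) (n : ℕ) : E :=
  (∑ k ∈ Icc 1 n, w k)⁻¹ • ∑ k ∈ Icc 1 n, w k • s k

theorem sum_smul_weightedMean {w : ℕ → ℝ} (hw : ∀ k, 0 ≤ w k) (s : ℕ → E) (n : ℕ) :
    (∑ k ∈ Icc 1 n, w k) • weightedMean w s n = ∑ k ∈ Icc 1 n, w k • s k := by
  by_cases hW : ∑ k ∈ Icc 1 n, w k = 0
  · have hw0 : ∀ k ∈ Icc 1 n, w k = 0 := (sum_eq_zero_iff_of_nonneg fun k _ ↦ hw k).1 hW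
    rw [hW, zero_smul, eq_comm]
    exact sum_eq_zero fun k hk ↦ by rw [hw0 k hk, zero_smul]
  · exact smul_inv_smul₀ hW _

theorem norm_sub_mul_le_of_weightedMean {w : ℕ → ℝ} (hw : ∀ k, 0 ≤ w k) (s : ℕ → E) (A : E)
    {n m : ℕ} (hnm : n ≤ m) {η : ℝ} (hη : ∀ k ∈ Ioc n m, ‖s k - s n‖ ≤ η) :
    ‖s n - A‖ * (∑ k ∈ Icc 1 m, w k - ∑ k ∈ Icc 1 n, w k) ≤
      (∑ k ∈ Icc 1 m, w k) * ‖weightedMean w s m - A‖ +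
        (∑ k ∈ Icc 1 n, w k) * ‖weightedMean w s n - A‖ +
          η * (∑ k ∈ Icc 1 m, w k - ∑ k ∈ Icc 1 n, w k) := by
  set W := fun j ↦ ∑ k ∈ Icc 1 j, w k
  have hS : ∀ j, W j • weightedMean w s j = ∑ k ∈ Icc 1 j, w k • s k :=
    sum_smul_weightedMean hw s
  have hW_nonneg : ∀ j, 0 ≤ W j := fun j ↦ sum_nonneg fun k _ ↦ hw k
  have hD : W m - W n = ∑ k ∈ Ioc n m, w k := sum_Icc_one_sub_sum_Icc_one w hnm
  have hD_nonneg : 0 ≤ W m - W n := hD ▸ sum_nonneg fun k _ ↦ hw k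
  have key : (W m - W n) • (s n - A) = W m • (weightedMean w s m - A) -
      W n • (weightedMean w s n - A) - ∑ k ∈ Ioc n m, w k • (s k - s n) := by
    simp only [smul_sub, hS, sum_sub_distrib, ← sum_smul, ← hD,
      ← sum_Icc_one_sub_sum_Icc_one (fun k ↦ w k • s k) hnm, sub_smul]
    abel
  have hosc : ‖∑ k ∈ Ioc n m, w k • (s k - s n)‖ ≤ η * (W m - W n) := by
    rw [hD, mul_sum]
    refine (norm_sum_le _ _).trans (sum_le_sum fun k hk ↦ ?_)
    rw [norm_smul, Real.norm_of_nonneg (hw k), mul_comm]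
    exact mul_le_mul_of_nonneg_right (hη k hk) (hw k)
  calc ‖s n - A‖ * (W m - W n) = ‖(W m - W n) • (s n - A)‖ := by
        rw [norm_smul, Real.norm_of_nonneg hD_nonneg, mul_comm]
    _ ≤ ‖W m • (weightedMean w s m - A)‖ + ‖W n • (weightedMean w s n - A)‖ +
          ‖∑ k ∈ Ioc n m, w k • (s k - s n)‖ := by
        rw [key]
        exact (norm_sub_le _ _).trans (add_le_add_left (norm_sub_le _ _) _)
    _ ≤ _ := by
        rw [norm_smul, norm_smul, Real.norm_of_nonneg (hW_nonneg m),
          Real.norm_of_nonneg (hW_nonneg n)]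
        exact add_le_add le_rfl hosc

def LogSlowlyOscillating (s : ℕ → E) : Prop :=
  ∀ ε > (0 : ℝ), ∃ n₀ : ℕ, ∃ l > (1 : ℝ),
    ∀ n k : ℕ, n₀ ≤ n → n < k → (k : ℝ) ≤ (n : ℝ) ^ l → ‖s k - s n‖ ≤ ε

theorem tendsto_of_tendsto_logMean {s : ℕ → E} {A : E} (hs : LogSlowlyOscillating s)
    (hT : Tendsto (weightedMean (fun k : ℕ ↦ (k : ℝ)⁻¹) s) atTop (𝓝 A)) :
    Tendsto s atTop (𝓝 A) := by
  refine Metric.tendsto_nhds.2 fun ε hε ↦ ?_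
  obtain ⟨n₀, l, hl, hosc⟩ := hs (ε / 4) (by positivity)
  set C := 8 * l / (l - 1)
  have hC : 0 < C := div_pos (by linarith) (by linarith)
  obtain ⟨N, hN⟩ := eventually_atTop.1 (Metric.tendsto_nhds.1 hT (ε / (4 * C)) (by positivity))
  filter_upwards [eventually_harmonic_floor_rpow_gap hl, eventually_ge_atTop n₀,
    eventually_ge_atTop N] with n ⟨hnm, hD, hgap⟩ hn₀ hnN
  set m := ⌊(n : ℝ) ^ l⌋₊
  have hbound := norm_sub_mul_le_of_weightedMean (fun k ↦ inv_nonneg.2 k.cast_nonneg) s A hnm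
    (η := ε / 4) fun k hk ↦ hosc n k hn₀ (mem_Ioc.1 hk).1
      ((Nat.cast_le.2 (mem_Ioc.1 hk).2).trans (Nat.floor_le (by positivity)))
  simp only [sum_Icc_inv_natCast_eq_harmonic] at hbound
  have hTm := (hN m (hnN.trans hnm)).le
  have hTn := (hN n hnN).le
  rw [dist_eq_norm] at hTm hTn ⊢
  have hH : ∀ j, (0 : ℝ) ≤ harmonic j := fun j ↦
    sum_Icc_inv_natCast_eq_harmonic j ▸ sum_nonneg fun k _ ↦ inv_nonneg.2 k.cast_nonneg
  have hmain : ‖s n - A‖ * ((harmonic m : ℝ) - harmonic n) ≤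
      ε / 2 * ((harmonic m : ℝ) - harmonic n) :=
    calc _ ≤ (harmonic m + harmonic n : ℝ) * (ε / (4 * C)) +
          ε / 4 * ((harmonic m : ℝ) - harmonic n) := by
          grw [hbound, hTm, hTn, add_mul]
          · exact hH n
          · exact hH m
      _ ≤ C * ((harmonic m : ℝ) - harmonic n) * (ε / (4 * C)) +
          ε / 4 * ((harmonic m : ℝ) - harmonic n) := by gcongr
      _ = ε / 2 * ((harmonic m : ℝ) - harmonic n) := by field_simp; ring
  exact (le_of_mul_le_mul_right hmain hD).trans_lt (by linarith)

end WeightedMean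

theorem corollary4
    (s : ℕ → ℂ) (A : ℂ)
    (hso : ∀ ε > (0:ℝ), ∃ n₀ : ℕ, 1 < n₀ ∧ ∃ l > (1:ℝ),
      ∀ n k : ℕ, n₀ ≤ n → n < k → (k : ℝ) ≤ (n : ℝ) ^ l → ‖s k - s n‖ ≤ ε)
    (hL1 : Tendsto (fun n : ℕ =>
        (((∑ k ∈ Finset.Icc 1 n, (1:ℝ) / k) : ℝ) : ℂ)⁻¹ *
          ∑ k ∈ Finset.Icc 1 n, s k / (k : ℂ))
      atTop (nhds A)) :
    Tendsto s atTop (nhds A) := by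
  refine tendsto_of_tendsto_logMean (fun ε hε ↦ ?_) ?_
  · obtain ⟨n₀, -, l, hl, h⟩ := hso ε hε
    exact ⟨n₀, l, hl, h⟩
  · convert hL1 using 2 with n
    simp [weightedMean, Complex.real_smul, mul_sum, div_eq_inv_mul]
end
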